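/- For any Z ∈ ℝ^{n1×n2}, the nuclear norm has the semidefinite characterization ‖Z‖_* = min { (1/2) tr(W₁ + W₂) : W₁ ∈ ℝ^{n1×n1}, W₂ ∈ ℝ^{n2×n2} symmetric, and the block matrix [[W₁, Z],[Zᵀ, W₂]] is positive semidefinite }. -/

import Mathlib

open Matrix

/-- The singular values of a real `n1 × n2` matrix `Z`, sorted in descending order. -/
noncomputable def svDesc {n1 n2 : ℕ} (Z : Matrix (Fin n1) (Fin n2) ℝ) : Fin n1 → ℝ :=
  fun i =>
    Real.sqrt ((Matrix.isHermitian_mul_conjTranspose_self Z).eigenvalues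
      (Tuple.sort (Matrix.isHermitian_mul_conjTranspose_self Z).eigenvalues i.rev))

/-- The nuclear norm of `Z`: the sum of all its singular values. -/
noncomputable def nuclearNorm {n1 n2 : ℕ} (Z : Matrix (Fin n1) (Fin n2) ℝ) : ℝ :=
  ∑ i, svDesc Z i

/-!
Diagonalize `Z Zᵀ = U diag(s²) Uᵀ` with `U` orthogonal; then `Z = U diag(s) Vᵀ` for the partial
isometry `V = Zᵀ U diag(s)⁻¹`. The block matrix with `W₁ = U diag(s) Uᵀ`, `W₂ = V diag(s) Vᵀ` is
`[U; V] diag(s) [U; V]ᵀ ⪰ 0`, and its objective is `∑ sᵢ`. Conversely, for a feasible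
`M = [[W₁, Z], [Zᵀ, W₂]]`, compressing by `[U; -V]` gives
`0 ≤ tr(UᵀW₁U) + tr(VᵀW₂V) - 2 tr(UᵀZV) ≤ tr W₁ + tr W₂ - 2 ∑ sᵢ`,
since compressing a positive semidefinite matrix by a partial isometry cannot increase its trace.
-/

namespace Matrix

variable {m n k : Type*} [Fintype m] [Fintype n] [Fintype k]

theorem PosSemidef.two_mul_trace_le_of_fromBlocks {A : Matrix m m ℝ} {Z : Matrix m n ℝ}
    {B : Matrix n n ℝ} (hM : (fromBlocks A Z Zᵀ B).PosSemidef) (X : Matrix m k ℝ)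
    (Y : Matrix n k ℝ) :
    2 * (Xᵀ * Z * Y).trace ≤ (Xᵀ * A * X).trace + (Yᵀ * B * Y).trace := by
  have hT := (hM.conjTranspose_mul_mul_same (fromRows X (-Y))).trace_nonneg
  have hexpand : (fromRows X (-Y))ᴴ * fromBlocks A Z Zᵀ B * fromRows X (-Y) =
      Xᵀ * A * X - (Xᵀ * Z * Y)ᵀ - Xᵀ * Z * Y + Yᵀ * B * Y := by
    simp only [conjTranspose_eq_transpose_of_trivial, transpose_fromRows,
      fromCols_mul_fromBlocks, fromCols_mul_fromRows, transpose_neg, transpose_mul,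
      transpose_transpose, Matrix.neg_mul, Matrix.mul_neg, Matrix.add_mul, Matrix.mul_assoc]
    abel
  rw [hexpand, trace_add, trace_sub, trace_sub, trace_transpose] at hT
  linarith

theorem PosSemidef.trace_transpose_mul_mul_le [DecidableEq n] {B : Matrix n n ℝ}
    (hB : B.PosSemidef) {V : Matrix n k ℝ} (hV : V * Vᵀ * V = V) :
    (Vᵀ * B * V).trace ≤ B.trace := by
  set R := 1 - V * Vᵀ
  have hRsymm : Rᵀ = R := by simp [R, transpose_sub]
  have hRidem : R * R = R := by
    have : V * Vᵀ * (V * Vᵀ) = V * Vᵀ := by rw [← Matrix.mul_assoc, hV]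
    simp only [R, Matrix.sub_mul, Matrix.mul_sub, Matrix.one_mul, Matrix.mul_one, this]
    abel
  have hRB : 0 ≤ (R * B).trace := by
    have := (hB.conjTranspose_mul_mul_same R).trace_nonneg
    rwa [conjTranspose_eq_transpose_of_trivial, hRsymm, trace_mul_cycle, hRidem] at this
  have : (R * B).trace = B.trace - (Vᵀ * B * V).trace := by
    rw [Matrix.sub_mul, Matrix.one_mul, trace_sub, Matrix.mul_assoc, trace_mul_comm V]
  linarith

theorem trace_mul_diagonal_mul_transpose [DecidableEq m] {X : Matrix k m ℝ} {s : m → ℝ}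
    (h : diagonal s * (Xᵀ * X) = diagonal s) : (X * diagonal s * Xᵀ).trace = ∑ i, s i := by
  rw [trace_mul_cycle, trace_mul_comm, h, trace_diagonal]

theorem posSemidef_fromBlocks_of_eq_mul_diagonal_mul_transpose [DecidableEq k]
    {U : Matrix m k ℝ} {V : Matrix n k ℝ} {s : k → ℝ} (hs : 0 ≤ s) {Z : Matrix m n ℝ}
    (hZ : Z = U * diagonal s * Vᵀ) :
    (fromBlocks (U * diagonal s * Uᵀ) Z Zᵀ (V * diagonal s * Vᵀ)).PosSemidef := by
  have hfactor : fromBlocks (U * diagonal s * Uᵀ) Z Zᵀ (V * diagonal s * Vᵀ) =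
      fromRows U V * diagonal s * (fromRows U V)ᴴ := by
    rw [conjTranspose_eq_transpose_of_trivial, transpose_fromRows, fromRows_mul,
      fromRows_mul_fromCols, hZ]
    simp only [transpose_mul, transpose_transpose, diagonal_transpose, Matrix.mul_assoc]
  rw [hfactor]
  exact (posSemidef_diagonal_iff.mpr hs).mul_mul_conjTranspose_same _

theorem two_mul_sum_le_trace_add_trace_of_posSemidef_fromBlocks [DecidableEq m] [DecidableEq n]
    [DecidableEq k] {A : Matrix m m ℝ} {Z : Matrix m n ℝ} {B : Matrix n n ℝ}
    (hM : (fromBlocks A Z Zᵀ B).PosSemidef) {U : Matrix m k ℝ} {V : Matrix n k ℝ} {s : k → ℝ}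
    (hU : U * Uᵀ * U = U) (hV : V * Vᵀ * V = V) (hsU : diagonal s * (Uᵀ * U) = diagonal s)
    (hsV : diagonal s * (Vᵀ * V) = diagonal s) (hZ : Z = U * diagonal s * Vᵀ) :
    2 * ∑ i, s i ≤ A.trace + B.trace := by
  have hA : A.PosSemidef := hM.submatrix Sum.inl
  have hB : B.PosSemidef := hM.submatrix Sum.inr
  have hUZV : (Uᵀ * Z * V).trace = ∑ i, s i := by
    have hregroup : Uᵀ * (U * diagonal s * Vᵀ) * V = Uᵀ * U * (diagonal s * (Vᵀ * V)) := by
      simp only [Matrix.mul_assoc]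
    rw [hZ, hregroup, trace_mul_comm, hsV, hsU, trace_diagonal]
  have := hM.two_mul_trace_le_of_fromBlocks U V
  linarith [hA.trace_transpose_mul_mul_le hU, hB.trace_transpose_mul_mul_le hV]

theorem diagonal_mul_inv_mul_eq_of_mul_transpose_eq_diagonal [DecidableEq m]
    {G : Matrix m n ℝ} {s : m → ℝ} (hG : G * Gᵀ = diagonal (s ^ 2)) :
    diagonal (s * s⁻¹) * G = G := by
  ext i j
  rw [diagonal_mul]
  by_cases hsi : s i = 0
  · have hrow : G i ⬝ᵥ G i = 0 := by
      simpa [mul_apply', hsi] using congrFun (congrFun hG i) i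
    simp [dotProduct_self_eq_zero.mp hrow]
  · simp [hsi]

/-- The witness is `V = Gᵀ * diagonal s⁻¹`; by `0⁻¹ = 0` it ignores the rows with `s i = 0`,
which vanish. -/
theorem exists_partialIsometry_of_mul_transpose_eq_diagonal [DecidableEq m]
    {G : Matrix m n ℝ} {s : m → ℝ} (hG : G * Gᵀ = diagonal (s ^ 2)) :
    ∃ V : Matrix n m ℝ, V * Vᵀ * V = V ∧ diagonal s * (Vᵀ * V) = diagonal s ∧
      G = diagonal s * Vᵀ := by
  have hVV : (Gᵀ * diagonal s⁻¹)ᵀ * (Gᵀ * diagonal s⁻¹) = diagonal (s⁻¹ * (s ^ 2 * s⁻¹)) := by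
    simp only [transpose_mul, transpose_transpose, diagonal_transpose, Matrix.mul_assoc]
    rw [← Matrix.mul_assoc G, hG, diagonal_mul_diagonal, diagonal_mul_diagonal]
    rfl
  refine ⟨Gᵀ * diagonal s⁻¹, ?_, ?_, ?_⟩
  · rw [Matrix.mul_assoc, hVV, Matrix.mul_assoc, diagonal_mul_diagonal]
    congr 2
    ext i
    simp only [Pi.mul_apply, Pi.pow_apply, Pi.inv_apply]
    by_cases hsi : s i = 0 <;> field_simp [hsi]
  · rw [hVV, diagonal_mul_diagonal]
    congr 1
    ext i
    simp only [Pi.mul_apply, Pi.pow_apply, Pi.inv_apply]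
    by_cases hsi : s i = 0 <;> field_simp [hsi]
  · simp only [transpose_mul, transpose_transpose, diagonal_transpose, ← Matrix.mul_assoc,
      diagonal_mul_diagonal]
    exact (diagonal_mul_inv_mul_eq_of_mul_transpose_eq_diagonal hG).symm

noncomputable def singularValuesUnsorted [DecidableEq m] (Z : Matrix m n ℝ) : m → ℝ :=
  fun i => √((isHermitian_mul_conjTranspose_self Z).eigenvalues i)

theorem exists_svd [DecidableEq m] (Z : Matrix m n ℝ) :
    ∃ (U : Matrix m m ℝ) (V : Matrix n m ℝ), Uᵀ * U = 1 ∧ V * Vᵀ * V = V ∧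
      diagonal Z.singularValuesUnsorted * (Vᵀ * V) = diagonal Z.singularValuesUnsorted ∧
      Z = U * diagonal Z.singularValuesUnsorted * Vᵀ := by
  set hA := isHermitian_mul_conjTranspose_self Z
  set U : Matrix m m ℝ := ↑hA.eigenvectorUnitary
  have hUU : Uᵀ * U = 1 := by
    rw [← conjTranspose_eq_transpose_of_trivial]
    exact mem_unitaryGroup_iff'.mp hA.eigenvectorUnitary.2
  have hspec : Uᵀ * (Z * Zᵀ) * U = diagonal hA.eigenvalues := by
    simpa [U, Unitary.conjStarAlgAut_star_apply, star_eq_conjTranspose,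
      conjTranspose_eq_transpose_of_trivial] using hA.conjStarAlgAut_star_eigenvectorUnitary
  have hG : Uᵀ * Z * (Uᵀ * Z)ᵀ = diagonal (Z.singularValuesUnsorted ^ 2) := by
    have hsq : Z.singularValuesUnsorted ^ 2 = hA.eigenvalues :=
      funext fun i => Real.sq_sqrt ((posSemidef_self_mul_conjTranspose Z).eigenvalues_nonneg i)
    rw [hsq, ← hspec, transpose_mul, transpose_transpose]
    simp only [Matrix.mul_assoc]
  obtain ⟨V, hV, hsV, hGV⟩ := exists_partialIsometry_of_mul_transpose_eq_diagonal hG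
  refine ⟨U, V, hUU, hV, hsV, ?_⟩
  rw [Matrix.mul_assoc, ← hGV, ← Matrix.mul_assoc, mul_eq_one_comm.mp hUU, Matrix.one_mul]

end Matrix

theorem nuclearNorm_eq_sum_singularValuesUnsorted {n1 n2 : ℕ} (Z : Matrix (Fin n1) (Fin n2) ℝ) :
    nuclearNorm Z = ∑ i, Z.singularValuesUnsorted i := by
  unfold nuclearNorm svDesc
  exact Equiv.sum_comp (Fin.revPerm.trans (Tuple.sort _)) Z.singularValuesUnsorted

/-- Semidefinite characterization of the nuclear norm:
`‖Z‖_* = min { ½ tr(W₁ + W₂) : [[W₁, Z], [Zᵀ, W₂]] ⪰ 0, W₁, W₂ symmetric }`. -/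
theorem nuclearNorm_sdp_characterization (n1 n2 : ℕ) (Z : Matrix (Fin n1) (Fin n2) ℝ) :
    IsLeast
      { c : ℝ | ∃ (W₁ : Matrix (Fin n1) (Fin n1) ℝ) (W₂ : Matrix (Fin n2) (Fin n2) ℝ),
          W₁.IsSymm ∧ W₂.IsSymm ∧ (Matrix.fromBlocks W₁ Z Zᵀ W₂).PosSemidef ∧
          c = (1 / 2) * (W₁.trace + W₂.trace) }
      (nuclearNorm Z) := by
  rw [nuclearNorm_eq_sum_singularValuesUnsorted]
  obtain ⟨U, V, hU, hV, hsV, hZ⟩ := exists_svd Z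
  set s := Z.singularValuesUnsorted
  have hs : 0 ≤ s := fun i => Real.sqrt_nonneg _
  have hUUU : U * Uᵀ * U = U := by rw [Matrix.mul_assoc, hU, Matrix.mul_one]
  have hsU : diagonal s * (Uᵀ * U) = diagonal s := by rw [hU, Matrix.mul_one]
  refine ⟨⟨U * diagonal s * Uᵀ, V * diagonal s * Vᵀ, ?_, ?_,
    posSemidef_fromBlocks_of_eq_mul_diagonal_mul_transpose hs hZ, ?_⟩, ?_⟩
  · simp [IsSymm, transpose_mul, Matrix.mul_assoc]
  · simp [IsSymm, transpose_mul, Matrix.mul_assoc]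
  · rw [trace_mul_diagonal_mul_transpose hsU, trace_mul_diagonal_mul_transpose hsV]
    ring
  · rintro _ ⟨W₁, W₂, -, -, hW, rfl⟩
    linarith [two_mul_sum_le_trace_add_trace_of_posSemidef_fromBlocks hW hUUU hV hsU hsV hZ]
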